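/- Let α be an alphabet and let a support over the simple regular expressions be given, consisting of: a type 𝔼; a map h : 𝔼 → RegularExpression α; a binary operation ∨𝔼 on 𝔼; an operation ·𝔼 : 𝔼 → RegularExpression α → 𝔼; and elements 1𝔼, 0𝔼 of 𝔼, satisfying L(h(𝒜 ∨𝔼 ℬ)) = L(h(𝒜)) ∪ L(h(ℬ)), L(h(𝒜 ·𝔼 F)) = L(h(𝒜)) · L(F), L(h(1𝔼)) = {ε} and L(h(0𝔼)) = ∅. Let D be the derivation via this support. Then for every nonempty word w over α and every regular expression E over α: w ∈ L(E) if and only if ε ∈ L(h(D(w,E))). (Hence any derivation via a support solves the membership problem for L(E).) -/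

import Mathlib

open scoped Classical

/-- A support over the simple regular expressions: a structure set `ε`, a map `h` back to
regular expressions, a sum-like operation `vee`, a product `dot` with an expression, and
constants `one`, `zero`, subject to the language conditions of Definition 1 of the paper. -/
structure Support (α : Type*) (ε : Type*) where
  h : ε → RegularExpression α
  vee : ε → ε → ε
  dot : ε → RegularExpression α → ε
  one : ε
  zero : ε
  h_vee : ∀ A B : ε, (h (vee A B)).matches' = (h A).matches' + (h B).matches'
  h_dot : ∀ (A : ε) (F : RegularExpression α), (h (dot A F)).matches' = (h A).matches' * F.matches'
  h_one : (h one).matches' = 1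
  h_zero : (h zero).matches' = 0

/-- Derivation of a regular expression with respect to a single symbol, via a support. -/
noncomputable def derivS {α ε : Type*} (S : Support α ε) (a : α) : RegularExpression α → ε
  | .zero => S.zero
  | .epsilon => S.zero
  | .char b => if b = a then S.one else S.zero
  | .plus E₁ E₂ => S.vee (derivS S a E₁) (derivS S a E₂)
  | .comp E₁ E₂ =>
      if [] ∈ E₁.matches' then S.vee (S.dot (derivS S a E₁) E₂) (derivS S a E₂)
      else S.dot (derivS S a E₁) E₂
  | .star E₁ => S.dot (derivS S a E₁) E₁.star

/-- Derivation via a support with respect to a nonempty word `a :: w`. -/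
noncomputable def derivWordS {α ε : Type*} (S : Support α ε) :
    α → List α → RegularExpression α → ε
  | a, [], E => derivS S a E
  | a, b :: u, E => derivWordS S b u (S.h (derivS S a E))

/-- Left quotient of a language by a word. -/
def lquot {α : Type*} (w : List α) (L : Language α) : Language α := {v | w ++ v ∈ L}

/-! The laws of a support say exactly that `h` turns the support derivative into an expression
with the same language as Brzozowski's derivative, so by structural induction
`L(h(D(a, E)))` is the left quotient `a⁻¹ L(E)`. Iterating, `L(h(D(w, E))) = w⁻¹ L(E)`,
which contains `ε` exactly when `w ∈ L(E)`. -/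

namespace RegularExpression

variable {α : Type*}

theorem matchEpsilon_iff_nil_mem_matches' [DecidableEq α] (P : RegularExpression α) :
    P.matchEpsilon ↔ [] ∈ P.matches' :=
  P.rmatch_iff_matches' []

theorem matches'_deriv [DecidableEq α] (P : RegularExpression α) (a : α) :
    (P.deriv a).matches' = lquot [a] P.matches' := by
  ext v
  exact ((P.deriv a).rmatch_iff_matches' v).symm.trans (P.rmatch_iff_matches' (a :: v))

end RegularExpression

theorem nil_mem_lquot_iff {α : Type*} (w : List α) (L : Language α) : [] ∈ lquot w L ↔ w ∈ L := by
  show w ++ [] ∈ L ↔ w ∈ L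
  rw [List.append_nil]

namespace Support

open RegularExpression

variable {α ε : Type*} (S : Support α ε)

theorem matches'_h_derivS_eq_matches'_deriv [DecidableEq α] (a : α) (E : RegularExpression α) :
    (S.h (derivS S a E)).matches' = (E.deriv a).matches' := by
  induction E with
  | zero => simp [derivS, S.h_zero]
  | epsilon => simp [derivS, S.h_zero]
  | char b =>
    by_cases hb : b = a
    · simp [derivS, RegularExpression.deriv, hb, S.h_one]
    · simp [derivS, RegularExpression.deriv, hb, S.h_zero]
  | plus E₁ E₂ ih₁ ih₂ => simp [derivS, RegularExpression.deriv, S.h_vee, ih₁, ih₂]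
  | comp E₁ E₂ ih₁ ih₂ =>
    by_cases hε : [] ∈ E₁.matches'
    · have hm : E₁.matchEpsilon := (matchEpsilon_iff_nil_mem_matches' E₁).2 hε
      rw [derivS, RegularExpression.deriv, if_pos hε, if_pos hm, S.h_vee, S.h_dot, ih₁, ih₂]
      rfl
    · have hm : ¬E₁.matchEpsilon := mt (matchEpsilon_iff_nil_mem_matches' E₁).1 hε
      rw [derivS, RegularExpression.deriv, if_neg hε, if_neg hm, S.h_dot, ih₁]
      rfl
  | star E₁ ih₁ =>
    simp only [derivS, RegularExpression.deriv, S.h_dot, ih₁]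
    rfl

theorem matches'_h_derivS (a : α) (E : RegularExpression α) :
    (S.h (derivS S a E)).matches' = lquot [a] E.matches' := by
  rw [matches'_h_derivS_eq_matches'_deriv, matches'_deriv]

theorem matches'_h_derivWordS (a : α) (w : List α) (E : RegularExpression α) :
    (S.h (derivWordS S a w E)).matches' = lquot (a :: w) E.matches' := by
  induction w generalizing a E with
  | nil => exact S.matches'_h_derivS a E
  | cons b u ih =>
    rw [derivWordS, ih, S.matches'_h_derivS]
    rfl

end Support

theorem support_derivation_membership {α ε : Type*} (S : Support α ε)
    (a : α) (w : List α) (E : RegularExpression α) :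
    a :: w ∈ E.matches' ↔ [] ∈ (S.h (derivWordS S a w E)).matches' := by
  rw [S.matches'_h_derivWordS, nil_mem_lquot_iff]
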